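/- arXiv:2001.00271 — 3 statements merged into one kernel-verified Lean document; each statement's English description precedes it below -/
import Mathlib

section
/- Let S, A, Ω be finite nonempty sets and consider a finite MDP with options with discount γ ∈ [0,1). The option Bellman operator T, acting on functions Q_U : S × Ω × A → ℝ by (T Q_U)(s,ω,a) = r(s,a) + γ Σ_{s'} P(s'|s,a) [ (1−β_ω(s')) Q_Ω(s',ω) + β_ω(s') Σ_{ω'} π_I(ω'|s') Q_Ω(s',ω') ], where Q_Ω(s,ω) = Σ_a π_ω(a|s) Q_U(s,ω,a), is a γ-contraction in the supremum norm; consequently there exists a unique pair of functions Q_U : S × Ω × A → ℝ and Q_Ω : S × Ω → ℝ satisfying the coupled Bellman equations Q_Ω(s,ω) = Σ_a π_ω(a|s) Q_U(s,ω,a) and Q_U(s,ω,a) = r(s,a) + γ Σ_{s'} P(s'|s,a) [ (1−β_ω(s')) Q_Ω(s',ω) + β_ω(s') Σ_{ω'} π_I(ω'|s') Q_Ω(s',ω') ]. -/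
/-!
Averaging against a probability vector never increases a sup-norm distance. The option Bellman
operator is built from three such averages (over actions with `π ω`, over the continue/terminate
choice with `β ω`, over next states with `P`) followed by multiplication by `γ`, so it is a
`γ`-contraction, and Banach's fixed point theorem applies. The first coupled equation determines
`Q_Ω` from `Q_U`, and substituting it into the second says that `Q_U` is a fixed point.
-/

open Finset

section Averaging

variable {ι : Type*} [Fintype ι] {w : ι → ℝ} {M : ℝ}

theorem abs_sum_mul_le_of_mem_stdSimplex (hw : w ∈ stdSimplex ℝ ι) {v : ι → ℝ}
    (hv : ∀ i, |v i| ≤ M) : |∑ i, w i * v i| ≤ M :=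
  calc |∑ i, w i * v i| ≤ ∑ i, |w i * v i| := abs_sum_le_sum_abs _ _
    _ = ∑ i, w i * |v i| := by simp only [abs_mul, abs_of_nonneg (hw.1 _)]
    _ ≤ ∑ i, w i * M := sum_le_sum fun i _ => mul_le_mul_of_nonneg_left (hv i) (hw.1 i)
    _ = M := by rw [← sum_mul, hw.2, one_mul]

theorem abs_sum_mul_sub_sum_mul_le_of_mem_stdSimplex (hw : w ∈ stdSimplex ℝ ι)
    {v v' : ι → ℝ} (h : ∀ i, |v i - v' i| ≤ M) :
    |∑ i, w i * v i - ∑ i, w i * v' i| ≤ M := by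
  rw [← sum_sub_distrib]
  simp only [← mul_sub]
  exact abs_sum_mul_le_of_mem_stdSimplex hw h

theorem div_sum_mem_stdSimplex {u : ι → ℝ} (hu0 : ∀ i, 0 ≤ u i) (hu : 0 < ∑ i, u i) :
    (fun i => u i / ∑ j, u j) ∈ stdSimplex ℝ ι :=
  ⟨fun i => div_nonneg (hu0 i) hu.le, by rw [← sum_div, div_self hu.ne']⟩

theorem abs_convexComb_sub_le {t x y x' y' : ℝ} (ht0 : 0 ≤ t) (ht1 : t ≤ 1)
    (hx : |x - x'| ≤ M) (hy : |y - y'| ≤ M) :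
    |((1 - t) * x + t * y) - ((1 - t) * x' + t * y')| ≤ M :=
  calc |((1 - t) * x + t * y) - ((1 - t) * x' + t * y')|
        = |(1 - t) * (x - x') + t * (y - y')| := by ring_nf
    _ ≤ (1 - t) * |x - x'| + t * |y - y'| := by
        refine (abs_add_le _ _).trans_eq ?_
        rw [abs_mul, abs_mul, abs_of_nonneg (sub_nonneg.2 ht1), abs_of_nonneg ht0]
    _ ≤ (1 - t) * M + t * M := by gcongr
    _ = M := by ring

end Averaging

theorem norm_le_iff_forall_abs_le_of_nonneg {α β δ : Type*} [Fintype α] [Fintype β]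
    [Fintype δ] {f : α → β → δ → ℝ} {C : ℝ} (hC : 0 ≤ C) :
    ‖f‖ ≤ C ↔ ∀ a b d, |f a b d| ≤ C := by
  simp only [pi_norm_le_iff_of_nonneg hC, Real.norm_eq_abs]

section OptionBellman

variable {S A Ω : Type*}

def optionValue [Fintype A] (π : Ω → S → A → ℝ) (Q : S → Ω → A → ℝ) (s : S) (ω : Ω) : ℝ :=
  ∑ a, π ω s a * Q s ω a

/-- The value of arriving in `s` while executing `ω`: continue `ω`, or terminate and pick a new
option from `πI`. -/
def valueUponArrival [Fintype Ω] (β : Ω → S → ℝ) (πI : S → Ω → ℝ) (q : S → Ω → ℝ) (s : S)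
    (ω : Ω) : ℝ :=
  (1 - β ω s) * q s ω + β ω s * ∑ ω', πI s ω' * q s ω'

def bellmanBackup [Fintype S] [Fintype Ω] (r : S → A → ℝ) (P : S → A → S → ℝ) (γ : ℝ)
    (β : Ω → S → ℝ) (πI : S → Ω → ℝ) (q : S → Ω → ℝ) (s : S) (ω : Ω) (a : A) : ℝ :=
  r s a + γ * ∑ s', P s a s' * valueUponArrival β πI q s' ω

def optionBellman [Fintype S] [Fintype A] [Fintype Ω] (r : S → A → ℝ) (P : S → A → S → ℝ)
    (γ : ℝ) (π : Ω → S → A → ℝ) (β : Ω → S → ℝ) (πI : S → Ω → ℝ) (Q : S → Ω → A → ℝ) :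
    S → Ω → A → ℝ :=
  bellmanBackup r P γ β πI (optionValue π Q)

variable {r : S → A → ℝ} {P : S → A → S → ℝ} {γ : ℝ} {π : Ω → S → A → ℝ} {β : Ω → S → ℝ}
  {πI : S → Ω → ℝ} {M : ℝ}

theorem abs_optionValue_sub_le [Fintype A] (hπ : ∀ ω s, π ω s ∈ stdSimplex ℝ A)
    {Q Q' : S → Ω → A → ℝ} (h : ∀ s ω a, |Q s ω a - Q' s ω a| ≤ M) (s : S) (ω : Ω) :
    |optionValue π Q s ω - optionValue π Q' s ω| ≤ M :=
  abs_sum_mul_sub_sum_mul_le_of_mem_stdSimplex (hπ ω s) (h s ω)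

theorem abs_valueUponArrival_sub_le [Fintype Ω] (hβ0 : ∀ ω s, 0 ≤ β ω s)
    (hβ1 : ∀ ω s, β ω s ≤ 1) (hπI : ∀ s, πI s ∈ stdSimplex ℝ Ω) {q q' : S → Ω → ℝ}
    (h : ∀ s ω, |q s ω - q' s ω| ≤ M) (s : S) (ω : Ω) :
    |valueUponArrival β πI q s ω - valueUponArrival β πI q' s ω| ≤ M :=
  abs_convexComb_sub_le (hβ0 ω s) (hβ1 ω s) (h s ω)
    (abs_sum_mul_sub_sum_mul_le_of_mem_stdSimplex (hπI s) (h s))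

theorem abs_bellmanBackup_sub_le [Fintype S] [Fintype Ω] (hP : ∀ s a, P s a ∈ stdSimplex ℝ S)
    (hγ : 0 ≤ γ) {q q' : S → Ω → ℝ}
    (h : ∀ s ω, |valueUponArrival β πI q s ω - valueUponArrival β πI q' s ω| ≤ M)
    (s : S) (ω : Ω) (a : A) :
    |bellmanBackup r P γ β πI q s ω a - bellmanBackup r P γ β πI q' s ω a| ≤ γ * M := by
  rw [bellmanBackup, bellmanBackup, add_sub_add_left_eq_sub, ← mul_sub, abs_mul, abs_of_nonneg hγ]
  exact mul_le_mul_of_nonneg_left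
    (abs_sum_mul_sub_sum_mul_le_of_mem_stdSimplex (hP s a) fun s' => h s' ω) hγ

theorem norm_optionBellman_sub_le [Fintype S] [Fintype A] [Fintype Ω]
    (hP : ∀ s a, P s a ∈ stdSimplex ℝ S) (hγ : 0 ≤ γ) (hπ : ∀ ω s, π ω s ∈ stdSimplex ℝ A)
    (hβ0 : ∀ ω s, 0 ≤ β ω s) (hβ1 : ∀ ω s, β ω s ≤ 1) (hπI : ∀ s, πI s ∈ stdSimplex ℝ Ω)
    (Q Q' : S → Ω → A → ℝ) :
    ‖optionBellman r P γ π β πI Q - optionBellman r P γ π β πI Q'‖ ≤ γ * ‖Q - Q'‖ := by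
  have hQ : ∀ s ω a, |Q s ω a - Q' s ω a| ≤ ‖Q - Q'‖ :=
    (norm_le_iff_forall_abs_le_of_nonneg (norm_nonneg _)).1 le_rfl
  refine (norm_le_iff_forall_abs_le_of_nonneg (mul_nonneg hγ (norm_nonneg _))).2 ?_
  exact abs_bellmanBackup_sub_le hP hγ
    (abs_valueUponArrival_sub_le hβ0 hβ1 hπI (abs_optionValue_sub_le hπ hQ))

theorem contractingWith_optionBellman [Fintype S] [Fintype A] [Fintype Ω]
    (hP : ∀ s a, P s a ∈ stdSimplex ℝ S) (hγ0 : 0 ≤ γ) (hγ1 : γ < 1)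
    (hπ : ∀ ω s, π ω s ∈ stdSimplex ℝ A) (hβ0 : ∀ ω s, 0 ≤ β ω s)
    (hβ1 : ∀ ω s, β ω s ≤ 1) (hπI : ∀ s, πI s ∈ stdSimplex ℝ Ω) :
    ContractingWith ⟨γ, hγ0⟩ (optionBellman r P γ π β πI) :=
  ⟨hγ1, LipschitzWith.of_dist_le_mul fun Q Q' => by
    rw [dist_eq_norm, dist_eq_norm]
    exact norm_optionBellman_sub_le hP hγ0 hπ hβ0 hβ1 hπI Q Q'⟩

end OptionBellman

theorem ContractingWith.existsUnique_isFixedPt {α : Type*} [MetricSpace α] [Nonempty α]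
    [CompleteSpace α] {K : NNReal} {f : α → α} (hf : ContractingWith K f) :
    ∃! x, Function.IsFixedPt f x :=
  ⟨hf.fixedPoint f, hf.fixedPoint_isFixedPt, fun _ hx => hf.fixedPoint_unique hx⟩

theorem existsUnique_prod_of_existsUnique_fixedPt {X Y : Type*} {f : Y → X} {g : X → Y}
    (h : ∃! x, Function.IsFixedPt (f ∘ g) x) : ∃! p : X × Y, p.2 = g p.1 ∧ p.1 = f p.2 := by
  obtain ⟨x, hx, huniq⟩ := h
  refine ⟨(x, g x), ⟨rfl, hx.symm⟩, ?_⟩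
  rintro ⟨x', y'⟩ ⟨hy' : y' = g x', hx' : x' = f y'⟩
  subst hy'
  rw [huniq x' hx'.symm]

theorem option_bellman_operator_contraction_and_unique_fixed_point_general
    {S A Ω : Type*} [Fintype S] [Fintype A] [Fintype Ω]
    (r : S → A → ℝ) (P : S → A → S → ℝ)
    (hP0 : ∀ s a s', 0 ≤ P s a s') (hP1 : ∀ s a, ∑ s', P s a s' = 1)
    (γ : ℝ) (hγ0 : 0 ≤ γ) (hγ1 : γ < 1)
    (π : Ω → S → A → ℝ)
    (hπ0 : ∀ ω s a, 0 ≤ π ω s a) (hπ1 : ∀ ω s, ∑ a, π ω s a = 1)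
    (β : Ω → S → ℝ) (hβ0 : ∀ ω s, 0 ≤ β ω s) (hβ1 : ∀ ω s, β ω s ≤ 1)
    (πΩ : S → Ω → ℝ)
    (hπΩ0 : ∀ s ω, 0 ≤ πΩ s ω)
    (I : S → Ω → ℝ) (hI0 : ∀ s ω, 0 ≤ I s ω)
    (hIpos : ∀ s, 0 < ∑ ω, I s ω * πΩ s ω)
    (πI : S → Ω → ℝ)
    (hπI : ∀ s ω, πI s ω = I s ω * πΩ s ω / ∑ ω', I s ω' * πΩ s ω')
    (T : (S → Ω → A → ℝ) → (S → Ω → A → ℝ))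
    (hT : ∀ QU : S → Ω → A → ℝ, ∀ s ω a,
      T QU s ω a = r s a + γ * ∑ s', P s a s' *
        ((1 - β ω s') * (∑ a', π ω s' a' * QU s' ω a') +
          β ω s' * ∑ ω', πI s' ω' * (∑ a', π ω' s' a' * QU s' ω' a'))) :
    (∀ Q Q' : S → Ω → A → ℝ, ‖T Q - T Q'‖ ≤ γ * ‖Q - Q'‖) ∧
      (∃! p : (S → Ω → A → ℝ) × (S → Ω → ℝ),
        (∀ s ω, p.2 s ω = ∑ a, π ω s a * p.1 s ω a) ∧
        (∀ s ω a, p.1 s ω a = r s a + γ * ∑ s', P s a s' *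
          ((1 - β ω s') * p.2 s' ω + β ω s' * ∑ ω', πI s' ω' * p.2 s' ω'))) := by
  obtain rfl : T = optionBellman r P γ π β πI := funext fun Q => funext₃ (hT Q)
  have hP : ∀ s a, P s a ∈ stdSimplex ℝ S := fun s a => ⟨hP0 s a, hP1 s a⟩
  have hπ : ∀ ω s, π ω s ∈ stdSimplex ℝ A := fun ω s => ⟨hπ0 ω s, hπ1 ω s⟩
  have hπI' : ∀ s, πI s ∈ stdSimplex ℝ Ω := fun s => by
    rw [show πI s = _ from funext (hπI s)]
    exact div_sum_mem_stdSimplex (fun ω => mul_nonneg (hI0 s ω) (hπΩ0 s ω)) (hIpos s)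
  refine ⟨norm_optionBellman_sub_le hP hγ0 hπ hβ0 hβ1 hπI', ?_⟩
  have hfix :=
    (contractingWith_optionBellman (r := r) hP hγ0 hγ1 hπ hβ0 hβ1 hπI').existsUnique_isFixedPt
  simpa only [funext_iff, optionValue, bellmanBackup, valueUponArrival] using
    existsUnique_prod_of_existsUnique_fixedPt (f := bellmanBackup r P γ β πI) hfix

/-- In a finite MDP with options (with interest policy over options `πI`
derived from an interest function `I` and a policy over options `πΩ`), the option Bellman
operator `T` is a `γ`-contraction in the supremum norm; consequently there exists a unique
pair `(Q_U, Q_Ω)` satisfying the coupled Bellman equations. -/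
theorem option_bellman_operator_contraction_and_unique_fixed_point
    {S A Ω : Type*} [Fintype S] [Fintype A] [Fintype Ω]
    [Nonempty S] [Nonempty A] [Nonempty Ω]
    (r : S → A → ℝ) (P : S → A → S → ℝ)
    (hP0 : ∀ s a s', 0 ≤ P s a s') (hP1 : ∀ s a, ∑ s', P s a s' = 1)
    (γ : ℝ) (hγ0 : 0 ≤ γ) (hγ1 : γ < 1)
    (π : Ω → S → A → ℝ)
    (hπ0 : ∀ ω s a, 0 ≤ π ω s a) (hπ1 : ∀ ω s, ∑ a, π ω s a = 1)
    (β : Ω → S → ℝ) (hβ0 : ∀ ω s, 0 ≤ β ω s) (hβ1 : ∀ ω s, β ω s ≤ 1)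
    (πΩ : S → Ω → ℝ)
    (hπΩ0 : ∀ s ω, 0 ≤ πΩ s ω) (hπΩ1 : ∀ s, ∑ ω, πΩ s ω = 1)
    (I : S → Ω → ℝ) (hI0 : ∀ s ω, 0 ≤ I s ω)
    (hIpos : ∀ s, 0 < ∑ ω, I s ω * πΩ s ω)
    (πI : S → Ω → ℝ)
    (hπI : ∀ s ω, πI s ω = I s ω * πΩ s ω / ∑ ω', I s ω' * πΩ s ω')
    (T : (S → Ω → A → ℝ) → (S → Ω → A → ℝ))
    (hT : ∀ QU : S → Ω → A → ℝ, ∀ s ω a,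
      T QU s ω a = r s a + γ * ∑ s', P s a s' *
        ((1 - β ω s') * (∑ a', π ω s' a' * QU s' ω a') +
          β ω s' * ∑ ω', πI s' ω' * (∑ a', π ω' s' a' * QU s' ω' a'))) :
    (∀ Q Q' : S → Ω → A → ℝ, ‖T Q - T Q'‖ ≤ γ * ‖Q - Q'‖) ∧
      (∃! p : (S → Ω → A → ℝ) × (S → Ω → ℝ),
        (∀ s ω, p.2 s ω = ∑ a, π ω s a * p.1 s ω a) ∧
        (∀ s ω a, p.1 s ω a = r s a + γ * ∑ s', P s a s' *
          ((1 - β ω s') * p.2 s' ω + β ω s' * ∑ ω', πI s' ω' * p.2 s' ω'))) :=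
  option_bellman_operator_contraction_and_unique_fixed_point_general r P hP0 hP1 γ hγ0 hγ1 π hπ0 hπ1
    β hβ0 hβ1 πΩ hπΩ0 I hI0 hIpos πI hπI T hT
end

section
/- Consider a finite MDP with options in which the interest function is parameterized: I : ℝ × S × Ω → ℝ, written I_z(s,ω), with z ↦ I_z(s,ω) differentiable for every (s,ω), I_z(s,ω) ≥ 0, and Σ_ω I_z(s,ω) π_Ω(ω|s) > 0 for every s and z; write π_{I_z} for the resulting interest policy over options and Q_Ω^z, Q_U^z for the unique solution of the coupled Bellman equations with policy over options π_{I_z}. Then for every state s and option ω, the map z ↦ Q_Ω^z(s,ω) is differentiable, and likewise z ↦ Q_U^z(s,ω,a) is differentiable for every action a. -/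
/-!
Stack the values `Q_Ω^z(s, ω)` into a vector `v_z` indexed by state–option pairs. The Bellman
equations say `(1 - γ M_z) v_z = c`, where `M_z` is the transition matrix of the Markov chain on
state–option pairs induced by `π_{I_z}` and `c` is the expected one-step reward. Since `M_z` is
row-stochastic and `γ < 1`, the matrix `1 - γ M_z` is strictly diagonally dominant, hence
invertible, and Cramer's rule writes `v_z` as a quotient of determinants whose entries are
differentiable in `z`. The values `Q_U^z` are then explicit expressions in `Q_Ω^z` and `π_{I_z}`.
-/

open Finset Matrix

namespace Matrix

variable {n : Type*} [Fintype n] [DecidableEq n]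

theorem differentiable_det_of_differentiable_entries {A : ℝ → Matrix n n ℝ}
    (hA : ∀ i j, Differentiable ℝ fun z => A z i j) :
    Differentiable ℝ fun z => (A z).det := by
  simp only [det_apply']
  fun_prop

theorem cramer_mulVec_self {R : Type*} [CommRing R] (A : Matrix n n R) (v : n → R) :
    A.cramer (A *ᵥ v) = A.det • v := by
  rw [cramer_eq_adjugate_mulVec, mulVec_mulVec, adjugate_mul, smul_mulVec, one_mulVec]

theorem differentiable_of_mulVec_eq {A : ℝ → Matrix n n ℝ} {v c : ℝ → n → ℝ}
    (hA : ∀ i j, Differentiable ℝ fun z => A z i j) (hdet : ∀ z, (A z).det ≠ 0)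
    (hc : ∀ i, Differentiable ℝ fun z => c z i) (hv : ∀ z, A z *ᵥ v z = c z) (i : n) :
    Differentiable ℝ fun z => v z i := by
  have hcramer : ∀ z, v z i = ((A z).updateCol i (c z)).det / (A z).det := fun z => by
    rw [← cramer_apply, ← hv, cramer_mulVec_self, Pi.smul_apply, smul_eq_mul,
      mul_div_cancel_left₀ _ (hdet z)]
  simp only [hcramer]
  refine Differentiable.div (differentiable_det_of_differentiable_entries fun k j => ?_)
    (differentiable_det_of_differentiable_entries hA) hdet
  by_cases hj : j = i
  · simpa [hj] using hc k
  · simpa [updateCol_ne hj] using hA k j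

theorem det_one_sub_ne_zero_of_sum_abs_lt_one (N : Matrix n n ℝ)
    (hN : ∀ i, ∑ j, |N i j| < 1) : (1 - N).det ≠ 0 := by
  refine det_ne_zero_of_sum_row_lt_diag fun k => ?_
  have hoff : ∀ j ∈ univ.erase k, ‖(1 - N) k j‖ = |N k j| := fun j hj => by
    simp [one_apply_ne' (ne_of_mem_erase hj)]
  calc ∑ j ∈ univ.erase k, ‖(1 - N) k j‖ = ∑ j, |N k j| - |N k k| := by
        rw [sum_congr rfl hoff, ← add_sum_erase _ _ (mem_univ k), add_sub_cancel_left]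
    _ < 1 - |N k k| := by linarith [hN k]
    _ ≤ ‖(1 - N) k k‖ := by
        rw [sub_apply, one_apply_eq, Real.norm_eq_abs]
        linarith [abs_sub_abs_le_abs_sub 1 (N k k), abs_one (α := ℝ)]

theorem det_one_sub_smul_ne_zero_of_mem_rowStochastic {M : Matrix n n ℝ}
    (hM : M ∈ rowStochastic ℝ n) {γ : ℝ} (hγ : |γ| < 1) : (1 - γ • M).det ≠ 0 := by
  refine det_one_sub_ne_zero_of_sum_abs_lt_one _ fun i => ?_
  simp only [smul_apply, smul_eq_mul, abs_mul, ← mul_sum,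
    abs_of_nonneg (nonneg_of_mem_rowStochastic hM), sum_row_of_mem_rowStochastic hM, mul_one,
    hγ]

end Matrix

section OptionMDP

variable {S A Ω : Type*} [Fintype A] [DecidableEq Ω]

/-- Probability that option `ω'` runs at `s'` after option `ω` ran: either `ω` continues, or it
terminates and `ω'` is drawn from `μ`. -/
def optionContinuation (β : Ω → S → ℝ) (μ : S → Ω → ℝ) (ω : Ω) (s' : S) (ω' : Ω) : ℝ :=
  (if ω' = ω then 1 - β ω s' else 0) + β ω s' * μ s' ω'

theorem sum_optionContinuation_mul [Fintype Ω] (β : Ω → S → ℝ) (μ : S → Ω → ℝ) (ω : Ω)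
    (s' : S) (v : Ω → ℝ) :
    ∑ ω', optionContinuation β μ ω s' ω' * v ω' =
      (1 - β ω s') * v ω + β ω s' * ∑ ω', μ s' ω' * v ω' := by
  simp only [optionContinuation, add_mul, sum_add_distrib, ite_mul, zero_mul, sum_ite_eq',
    mem_univ, if_true, mul_assoc, ← mul_sum]

def optionTransition (π : Ω → S → A → ℝ) (P : S → A → S → ℝ) (β : Ω → S → ℝ)
    (μ : S → Ω → ℝ) : Matrix (S × Ω) (S × Ω) ℝ :=
  of fun p q => ∑ a, π p.2 p.1 a * P p.1 a q.1 * optionContinuation β μ p.2 q.1 q.2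

theorem optionTransition_mulVec [Fintype S] [Fintype Ω] (π : Ω → S → A → ℝ)
    (P : S → A → S → ℝ) (β : Ω → S → ℝ) (μ : S → Ω → ℝ) (v : S × Ω → ℝ) (s : S) (ω : Ω) :
    (optionTransition π P β μ *ᵥ v) (s, ω) = ∑ a, π ω s a * ∑ s', P s a s' *
      ((1 - β ω s') * v (s', ω) + β ω s' * ∑ ω', μ s' ω' * v (s', ω')) := by
  conv_rhs =>
    enter [2, a, 2, 2, s', 2]
    rw [← sum_optionContinuation_mul β μ ω s' fun ω' => v (s', ω')]
  simp only [mulVec, dotProduct, optionTransition, of_apply, Fintype.sum_prod_type, sum_mul,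
    mul_sum]
  refine (sum_congr rfl fun s' _ => sum_comm).trans (sum_comm.trans ?_)
  exact sum_congr rfl fun a _ => sum_congr rfl fun s' _ => sum_congr rfl fun ω' _ => by ring

theorem optionTransition_mem_rowStochastic [Fintype S] [Fintype Ω] [DecidableEq S]
    {π : Ω → S → A → ℝ} {P : S → A → S → ℝ} {β : Ω → S → ℝ} {μ : S → Ω → ℝ}
    (hπ0 : ∀ ω s a, 0 ≤ π ω s a) (hπ1 : ∀ ω s, ∑ a, π ω s a = 1)
    (hP0 : ∀ s a s', 0 ≤ P s a s') (hP1 : ∀ s a, ∑ s', P s a s' = 1)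
    (hβ0 : ∀ ω s, 0 ≤ β ω s) (hβ1 : ∀ ω s, β ω s ≤ 1)
    (hμ0 : ∀ s ω, 0 ≤ μ s ω) (hμ1 : ∀ s, ∑ ω, μ s ω = 1) :
    optionTransition π P β μ ∈ rowStochastic ℝ (S × Ω) := by
  refine mem_rowStochastic.2 ⟨fun p q => sum_nonneg fun a _ => ?_, ?_⟩
  · have hcont : 0 ≤ optionContinuation β μ p.2 q.1 q.2 := by
      unfold optionContinuation
      have := hβ1 p.2 q.1
      split_ifs <;> nlinarith [hβ0 p.2 q.1, hμ0 q.1 q.2]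
    exact mul_nonneg (mul_nonneg (hπ0 _ _ _) (hP0 _ _ _)) hcont
  · ext ⟨s, ω⟩
    simp [optionTransition_mulVec, hμ1, hP1, hπ1]

theorem differentiable_optionTransition_apply [Fintype S] (π : Ω → S → A → ℝ)
    (P : S → A → S → ℝ) (β : Ω → S → ℝ) {μ : ℝ → S → Ω → ℝ}
    (hμ : ∀ s ω, Differentiable ℝ fun z => μ z s ω) (p q : S × Ω) :
    Differentiable ℝ fun z => optionTransition π P β (μ z) p q := by
  simp only [optionTransition, optionContinuation, of_apply]
  fun_prop

theorem one_sub_smul_optionTransition_mulVec_eq [Fintype S] [Fintype Ω] [DecidableEq S]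
    {r : S → A → ℝ} {P : S → A → S → ℝ} {γ : ℝ} {π : Ω → S → A → ℝ} {β : Ω → S → ℝ}
    {μ : S → Ω → ℝ} {QU : S → Ω → A → ℝ} {QΩ : S → Ω → ℝ}
    (hQΩ : ∀ s ω, QΩ s ω = ∑ a, π ω s a * QU s ω a)
    (hQU : ∀ s ω a, QU s ω a = r s a + γ * ∑ s', P s a s' *
      ((1 - β ω s') * QΩ s' ω + β ω s' * ∑ ω', μ s' ω' * QΩ s' ω')) :
    (1 - γ • optionTransition π P β μ) *ᵥ (fun p => QΩ p.1 p.2) =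
      fun p => ∑ a, π p.2 p.1 a * r p.1 a := by
  ext ⟨s, ω⟩
  rw [sub_mulVec, one_mulVec, smul_mulVec, Pi.sub_apply, Pi.smul_apply,
    optionTransition_mulVec, hQΩ s ω]
  simp only [hQU, mul_add, sum_add_distrib, smul_eq_mul, mul_left_comm _ γ, ← mul_sum]
  ring

end OptionMDP

theorem option_value_differentiable_in_interest_parameter_general
    {S A Ω : Type*} [Fintype S] [Fintype A] [Fintype Ω]
    (r : S → A → ℝ) (P : S → A → S → ℝ)
    (hP0 : ∀ s a s', 0 ≤ P s a s') (hP1 : ∀ s a, ∑ s', P s a s' = 1)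
    (γ : ℝ) (hγ0 : 0 ≤ γ) (hγ1 : γ < 1)
    (π : Ω → S → A → ℝ)
    (hπ0 : ∀ ω s a, 0 ≤ π ω s a) (hπ1 : ∀ ω s, ∑ a, π ω s a = 1)
    (β : Ω → S → ℝ) (hβ0 : ∀ ω s, 0 ≤ β ω s) (hβ1 : ∀ ω s, β ω s ≤ 1)
    (πΩ : S → Ω → ℝ)
    (hπΩ0 : ∀ s ω, 0 ≤ πΩ s ω)
    (I : ℝ → S → Ω → ℝ)
    (hIdiff : ∀ s ω, Differentiable ℝ (fun z => I z s ω))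
    (hI0 : ∀ z s ω, 0 ≤ I z s ω)
    (hIpos : ∀ z s, 0 < ∑ ω, I z s ω * πΩ s ω)
    (πI : ℝ → S → Ω → ℝ)
    (hπI : ∀ z s ω, πI z s ω = I z s ω * πΩ s ω / ∑ ω', I z s ω' * πΩ s ω')
    (QU : ℝ → S → Ω → A → ℝ) (QΩ : ℝ → S → Ω → ℝ)
    (hQΩ : ∀ z s ω, QΩ z s ω = ∑ a, π ω s a * QU z s ω a)
    (hQU : ∀ z s ω a, QU z s ω a = r s a + γ * ∑ s', P s a s' *
      ((1 - β ω s') * QΩ z s' ω + β ω s' * ∑ ω', πI z s' ω' * QΩ z s' ω')) :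
    (∀ s ω, Differentiable ℝ (fun z => QΩ z s ω)) ∧
    (∀ s ω a, Differentiable ℝ (fun z => QU z s ω a)) := by
  classical
  have hπI_diff : ∀ s ω, Differentiable ℝ fun z => πI z s ω := fun s ω => by
    simp only [hπI]
    exact ((hIdiff s ω).mul_const _).div (by fun_prop) fun z => (hIpos z s).ne'
  have hπI0 : ∀ z s ω, 0 ≤ πI z s ω := fun z s ω => by
    rw [hπI]
    exact div_nonneg (mul_nonneg (hI0 z s ω) (hπΩ0 s ω)) (hIpos z s).le
  have hπI1 : ∀ z s, ∑ ω, πI z s ω = 1 := fun z s => by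
    simp only [hπI, ← sum_div, div_self (hIpos z s).ne']
  have hdet : ∀ z, (1 - γ • optionTransition π P β (πI z)).det ≠ 0 := fun z =>
    det_one_sub_smul_ne_zero_of_mem_rowStochastic (optionTransition_mem_rowStochastic
      hπ0 hπ1 hP0 hP1 hβ0 hβ1 (hπI0 z) (hπI1 z)) (abs_lt.2 ⟨by linarith, hγ1⟩)
  have hentries : ∀ p q, Differentiable ℝ fun z =>
      (1 - γ • optionTransition π P β (πI z)) p q := fun p q => by
    simpa only [Matrix.sub_apply, Matrix.smul_apply, smul_eq_mul] using
      (differentiable_optionTransition_apply π P β hπI_diff p q).const_mul γ |>.const_sub _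
  have hQΩ_diff : ∀ s ω, Differentiable ℝ fun z => QΩ z s ω := fun s ω =>
    differentiable_of_mulVec_eq (v := fun z p => QΩ z p.1 p.2)
      (c := fun _ p => ∑ a, π p.2 p.1 a * r p.1 a) hentries hdet
      (fun _ => differentiable_const _)
      (fun z => one_sub_smul_optionTransition_mulVec_eq (hQΩ z) (hQU z)) (s, ω)
  refine ⟨hQΩ_diff, fun s ω a => ?_⟩
  simp only [hQU]
  fun_prop

/-- For a finite MDP with options with a parameterized interest function
`I_z` (differentiable in `z`), the option-value functions `Q_Ω^z` and `Q_U^z` solving the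
coupled Bellman equations depend differentiably on `z`. -/
theorem option_value_differentiable_in_interest_parameter
    {S A Ω : Type*} [Fintype S] [Fintype A] [Fintype Ω]
    [Nonempty S] [Nonempty A] [Nonempty Ω]
    (r : S → A → ℝ) (P : S → A → S → ℝ)
    (hP0 : ∀ s a s', 0 ≤ P s a s') (hP1 : ∀ s a, ∑ s', P s a s' = 1)
    (γ : ℝ) (hγ0 : 0 ≤ γ) (hγ1 : γ < 1)
    (π : Ω → S → A → ℝ)
    (hπ0 : ∀ ω s a, 0 ≤ π ω s a) (hπ1 : ∀ ω s, ∑ a, π ω s a = 1)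
    (β : Ω → S → ℝ) (hβ0 : ∀ ω s, 0 ≤ β ω s) (hβ1 : ∀ ω s, β ω s ≤ 1)
    (πΩ : S → Ω → ℝ)
    (hπΩ0 : ∀ s ω, 0 ≤ πΩ s ω) (hπΩ1 : ∀ s, ∑ ω, πΩ s ω = 1)
    (I : ℝ → S → Ω → ℝ)
    (hIdiff : ∀ s ω, Differentiable ℝ (fun z => I z s ω))
    (hI0 : ∀ z s ω, 0 ≤ I z s ω)
    (hIpos : ∀ z s, 0 < ∑ ω, I z s ω * πΩ s ω)
    (πI : ℝ → S → Ω → ℝ)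
    (hπI : ∀ z s ω, πI z s ω = I z s ω * πΩ s ω / ∑ ω', I z s ω' * πΩ s ω')
    (QU : ℝ → S → Ω → A → ℝ) (QΩ : ℝ → S → Ω → ℝ)
    (hQΩ : ∀ z s ω, QΩ z s ω = ∑ a, π ω s a * QU z s ω a)
    (hQU : ∀ z s ω a, QU z s ω a = r s a + γ * ∑ s', P s a s' *
      ((1 - β ω s') * QΩ z s' ω + β ω s' * ∑ ω', πI z s' ω' * QΩ z s' ω')) :
    (∀ s ω, Differentiable ℝ (fun z => QΩ z s ω)) ∧
    (∀ s ω a, Differentiable ℝ (fun z => QU z s ω a)) :=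
  option_value_differentiable_in_interest_parameter_general r P hP0 hP1 γ hγ0 hγ1 π hπ0 hπ1 β hβ0
    hβ1 πΩ hπΩ0 I hIdiff hI0 hIpos πI hπI QU QΩ hQΩ hQU
end

section
/- (Interest-function policy gradient, Theorem 1.) Consider a finite MDP with options in which the interest function is parameterized: I : ℝ × S × Ω → ℝ, written I_z(s,ω), with z ↦ I_z(s,ω) differentiable for every (s,ω), I_z(s,ω) ≥ 0, and Σ_ω I_z(s,ω) π_Ω(ω|s) > 0 for every s and z; write π_{I_z} for the resulting interest policy over options, Q_Ω^z for the corresponding option-value function over options, P₁^z((s',ω')|(s,ω)) = Σ_a π_ω(a|s) P(s'|s,a) [ (1−β_ω(s')) 1{ω'=ω} + β_ω(s') π_{I_z}(ω'|s') ] for the augmented transition kernel over state-option pairs, and μ̂^z((s̃,ω̃)|(s,ω)) = Σ_{t=0}^∞ γ^t (P₁^z)^t((s̃,ω̃)|(s,ω)) for the discounted weighting of state-option pairs along trajectories starting from (s,ω). Then the gradient of the expected discounted return with respect to z at (s,ω) is: ∂Q_Ω^z(s,ω)/∂z = Σ_{(s̃,ω̃)} μ̂^z((s̃,ω̃)|(s,ω))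 · γ Σ_a π_{ω̃}(a|s̃) Σ_{s'} P(s'|s̃,a) β_{ω̃}(s') Σ_{ω'} (∂π_{I_z}(ω'|s')/∂z) Q_Ω^z(s',ω'). -/
/-!
Write `Q` for the vector `(s, ω) ↦ Q_Ω(s, ω)`. The Bellman equations say `Q = R + γ P₁ Q`, and
since `P₁` is row-stochastic, `μ̂ = ∑ₜ γᵗ P₁ᵗ` is a left inverse of `1 - γ P₁`. By Cramer's rule
`Q = (1 - γ P₁)⁻¹ R` is differentiable in `z`, and differentiating the Bellman equation gives
`(1 - γ P₁) Q' = γ P₁' Q`, that is `Q' = μ̂ (γ P₁' Q)`. Only the termination part of `P₁`, in which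
the next option is drawn from `π_{I_z}`, depends on `z`, and `P₁' Q` is the inner sum of the claim.
-/

open Finset Matrix

namespace Matrix

section Calculus

variable {n 𝕜 E : Type*} [Fintype n] [DecidableEq n] [NontriviallyNormedField 𝕜]
  [NormedAddCommGroup E] [NormedSpace 𝕜 E] {M : E → Matrix n n 𝕜} {x : E}

theorem differentiableAt_det (hM : ∀ i j, DifferentiableAt 𝕜 (fun x => M x i j) x) :
    DifferentiableAt 𝕜 (fun x => (M x).det) x := by
  simp only [det_apply, Units.smul_def, zsmul_eq_mul]
  exact DifferentiableAt.fun_sum fun σ _ =>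
    (HasFDerivAt.finsetProd fun i _ => (hM (σ i) i).hasFDerivAt).differentiableAt.const_mul _

theorem differentiableAt_inv_apply (hM : ∀ i j, DifferentiableAt 𝕜 (fun x => M x i j) x)
    (hdet : (M x).det ≠ 0) (i j : n) : DifferentiableAt 𝕜 (fun x => (M x)⁻¹ i j) x := by
  simp only [inv_def, Ring.inverse_eq_inv', smul_apply, smul_eq_mul, adjugate_apply]
  refine ((differentiableAt_det hM).inv hdet).mul (differentiableAt_det fun k l => ?_)
  by_cases hk : k = j
  · simp only [updateRow_apply, hk, if_true, differentiableAt_const]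
  · simpa only [updateRow_apply, hk, if_false] using hM k l

end Calculus

section DiscountedVisits

variable {n : Type*} [Fintype n] [DecidableEq n] {γ : ℝ} {K : Matrix n n ℝ}

noncomputable def discountedVisits (γ : ℝ) (K : Matrix n n ℝ) : Matrix n n ℝ :=
  of fun i j => ∑' t : ℕ, γ ^ t * (K ^ t) i j

theorem summable_geometric_mul_pow_apply (hK : K ∈ rowStochastic ℝ n) (hγ0 : 0 ≤ γ)
    (hγ1 : γ < 1) (i j : n) : Summable fun t : ℕ => γ ^ t * (K ^ t) i j := by
  refine (summable_geometric_of_lt_one hγ0 hγ1).of_nonneg_of_le (fun t => ?_) fun t => ?_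
  · exact mul_nonneg (pow_nonneg hγ0 t) (nonneg_of_mem_rowStochastic (pow_mem hK t))
  · exact mul_le_of_le_one_right (pow_nonneg hγ0 t) (le_one_of_mem_rowStochastic (pow_mem hK t))

theorem discountedVisits_mul_one_sub_smul (hK : K ∈ rowStochastic ℝ n) (hγ0 : 0 ≤ γ)
    (hγ1 : γ < 1) : discountedVisits γ K * (1 - γ • K) = 1 := by
  ext i j
  have hs := summable_geometric_mul_pow_apply hK hγ0 hγ1
  have hshift : γ * (discountedVisits γ K * K) i j
      = ∑' t : ℕ, γ ^ (t + 1) * (K ^ (t + 1)) i j := by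
    simp only [mul_apply, discountedVisits, of_apply, ← tsum_mul_right]
    rw [← Summable.tsum_finsetSum fun k _ => (hs i k).mul_right _, ← tsum_mul_left]
    congr 1
    ext t
    simp only [pow_succ, mul_apply, mul_sum]
    exact sum_congr rfl fun k _ => by ring
  rw [mul_sub, mul_one, mul_smul_comm, sub_apply, smul_apply, smul_eq_mul, hshift,
    discountedVisits, of_apply, (hs i j).tsum_eq_zero_add]
  simp

theorem eq_discountedVisits_mulVec_of_eq_add (hK : K ∈ rowStochastic ℝ n) (hγ0 : 0 ≤ γ)
    (hγ1 : γ < 1) {v R : n → ℝ} (hv : v = R + γ • K *ᵥ v) :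
    v = discountedVisits γ K *ᵥ R := by
  have hR : (1 - γ • K) *ᵥ v = R := by
    rw [sub_mulVec, one_mulVec, smul_mulVec]
    nth_rw 1 [hv]
    abel
  rw [← hR, mulVec_mulVec, discountedVisits_mul_one_sub_smul hK hγ0 hγ1, one_mulVec]

theorem hasDerivAt_apply_of_eq_add_smul_mulVec {P : ℝ → Matrix n n ℝ} {P' : Matrix n n ℝ}
    {R : n → ℝ} {v : ℝ → n → ℝ} {z : ℝ} (hγ0 : 0 ≤ γ) (hγ1 : γ < 1)
    (hP : ∀ z, P z ∈ rowStochastic ℝ n) (hP' : ∀ i j, HasDerivAt (fun z => P z i j) (P' i j) z)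
    (hv : ∀ z, v z = R + γ • P z *ᵥ v z) (i : n) :
    HasDerivAt (fun z => v z i) ((discountedVisits γ (P z) *ᵥ (γ • P' *ᵥ v z)) i) z := by
  have hleft z := discountedVisits_mul_one_sub_smul (hP z) hγ0 hγ1
  have hdiff : ∀ j, DifferentiableAt ℝ (fun z => v z j) z := by
    intro j
    have hM : ∀ k l, DifferentiableAt ℝ (fun z => (1 - γ • P z) k l) z := fun k l => by
      simp only [sub_apply, smul_apply, smul_eq_mul]
      exact ((hP' k l).differentiableAt.const_mul γ).const_sub _
    simp_rw [fun z => eq_discountedVisits_mulVec_of_eq_add (hP z) hγ0 hγ1 (hv z),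
      ← fun z => inv_eq_left_inv (hleft z), mulVec, dotProduct]
    exact DifferentiableAt.fun_sum fun k _ =>
      (differentiableAt_inv_apply hM (det_ne_zero_of_left_inverse (hleft z)) j k).mul_const _
  set v' : n → ℝ := fun j => deriv (fun z => v z j) z
  have hv' : v' = γ • P' *ᵥ v z + γ • P z *ᵥ v' := by
    ext j
    have hvj : (fun z => v z j) = fun z => R j + γ * ∑ k, P z j k * v z k :=
      funext fun z => by simpa [mulVec, dotProduct] using congrFun (hv z) j
    have hderiv :
        HasDerivAt (fun z => v z j) (γ * ∑ k, (P' j k * v z k + P z j k * v' k)) z := by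
      rw [hvj]
      exact ((HasDerivAt.fun_sum fun k _ => (hP' j k).mul (hdiff k).hasDerivAt).const_mul
        γ).const_add (R j)
    simp [v', hderiv.deriv, mulVec, dotProduct, sum_add_distrib, mul_add]
  rw [← eq_discountedVisits_mulVec_of_eq_add (hP z) hγ0 hγ1 hv']
  exact (hdiff i).hasDerivAt

end DiscountedVisits

end Matrix

section Options

variable {S A Ω : Type*} [Fintype A] (π : Ω → S → A → ℝ) (P : S → A → S → ℝ) (β : Ω → S → ℝ)

def continuationKernel [DecidableEq Ω] : Matrix (S × Ω) (S × Ω) ℝ :=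
  of fun x y => ∑ a, π x.2 x.1 a * P x.1 a y.1 * ((1 - β x.2 y.1) * if y.2 = x.2 then 1 else 0)

def terminationKernel (μ : S → Ω → ℝ) : Matrix (S × Ω) (S × Ω) ℝ :=
  of fun x y => ∑ a, π x.2 x.1 a * P x.1 a y.1 * (β x.2 y.1 * μ y.1 y.2)

theorem continuationKernel_mulVec [Fintype S] [Fintype Ω] [DecidableEq Ω] (q : S × Ω → ℝ)
    (s : S) (ω : Ω) :
    (continuationKernel π P β *ᵥ q) (s, ω)
      = ∑ a, π ω s a * ∑ s', P s a s' * ((1 - β ω s') * q (s', ω)) := by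
  simp only [mulVec, dotProduct, continuationKernel, of_apply, Fintype.sum_prod_type, sum_mul,
    mul_sum]
  conv_rhs => rw [sum_comm]
  refine sum_congr rfl fun s' _ => ?_
  rw [sum_comm]
  refine sum_congr rfl fun a _ => ?_
  simp [mul_assoc]

theorem terminationKernel_mulVec [Fintype S] [Fintype Ω] (μ : S → Ω → ℝ) (q : S × Ω → ℝ)
    (s : S) (ω : Ω) :
    (terminationKernel π P β μ *ᵥ q) (s, ω)
      = ∑ a, π ω s a * ∑ s', P s a s' * (β ω s' * ∑ ω', μ s' ω' * q (s', ω')) := by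
  simp only [mulVec, dotProduct, terminationKernel, of_apply, Fintype.sum_prod_type, sum_mul,
    mul_sum]
  conv_rhs => rw [sum_comm]
  refine sum_congr rfl fun s' _ => ?_
  rw [sum_comm]
  exact sum_congr rfl fun a _ => sum_congr rfl fun ω' _ => by ring

theorem hasDerivAt_terminationKernel_apply {μ : ℝ → S → Ω → ℝ} {μ' : S → Ω → ℝ} {z : ℝ}
    (hμ : ∀ s ω, HasDerivAt (fun z => μ z s ω) (μ' s ω) z) (x y : S × Ω) :
    HasDerivAt (fun z => terminationKernel π P β (μ z) x y)
      (terminationKernel π P β μ' x y) z :=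
  HasDerivAt.fun_sum fun _ _ => ((hμ y.1 y.2).const_mul _).const_mul _

theorem continuationKernel_add_terminationKernel_mem_rowStochastic [Fintype S] [Fintype Ω]
    [DecidableEq S] [DecidableEq Ω] {μ : S → Ω → ℝ}
    (hP0 : ∀ s a s', 0 ≤ P s a s') (hP1 : ∀ s a, ∑ s', P s a s' = 1)
    (hπ0 : ∀ ω s a, 0 ≤ π ω s a) (hπ1 : ∀ ω s, ∑ a, π ω s a = 1)
    (hβ0 : ∀ ω s, 0 ≤ β ω s) (hβ1 : ∀ ω s, β ω s ≤ 1)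
    (hμ0 : ∀ s ω, 0 ≤ μ s ω) (hμ1 : ∀ s, ∑ ω, μ s ω = 1) :
    continuationKernel π P β + terminationKernel π P β μ ∈ rowStochastic ℝ (S × Ω) := by
  refine ⟨fun x y => add_nonneg ?_ ?_, ?_⟩
  · refine sum_nonneg fun a _ => mul_nonneg (mul_nonneg (hπ0 ..) (hP0 ..)) ?_
    exact mul_nonneg (sub_nonneg.2 (hβ1 ..)) (by split_ifs <;> norm_num)
  · exact sum_nonneg fun a _ =>
      mul_nonneg (mul_nonneg (hπ0 ..) (hP0 ..)) (mul_nonneg (hβ0 ..) (hμ0 ..))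
  · ext ⟨s, ω⟩
    simp only [add_mulVec, Pi.add_apply, continuationKernel_mulVec, terminationKernel_mulVec,
      Pi.one_apply, mul_one, hμ1, ← sum_add_distrib, ← mul_add, sub_add_cancel, hP1, hπ1]

theorem optionValue_eq_add_smul_mulVec [Fintype S] [Fintype Ω] [DecidableEq Ω] {r : S → A → ℝ}
    {γ : ℝ} {μ : S → Ω → ℝ} {Q : S → Ω → ℝ} {U : S → Ω → A → ℝ}
    (hQ : ∀ s ω, Q s ω = ∑ a, π ω s a * U s ω a)
    (hU : ∀ s ω a, U s ω a = r s a + γ * ∑ s', P s a s' *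
      ((1 - β ω s') * Q s' ω + β ω s' * ∑ ω', μ s' ω' * Q s' ω')) :
    (fun x : S × Ω => Q x.1 x.2) = (fun x => ∑ a, π x.2 x.1 a * r x.1 a) +
      γ • (continuationKernel π P β + terminationKernel π P β μ) *ᵥ fun x => Q x.1 x.2 := by
  ext ⟨s, ω⟩
  simp only [Pi.add_apply, Pi.smul_apply, smul_eq_mul, add_mulVec, continuationKernel_mulVec,
    terminationKernel_mulVec]
  rw [hQ]
  simp only [hU, mul_add, sum_add_distrib, mul_sum, mul_left_comm (π _ _ _) γ]

end Options

theorem interest_option_critic_policy_gradient_general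
    {S A Ω : Type*} [Fintype S] [Fintype A] [Fintype Ω]
    [DecidableEq S] [DecidableEq Ω]
    (r : S → A → ℝ) (P : S → A → S → ℝ)
    (hP0 : ∀ s a s', 0 ≤ P s a s') (hP1 : ∀ s a, ∑ s', P s a s' = 1)
    (γ : ℝ) (hγ0 : 0 ≤ γ) (hγ1 : γ < 1)
    (π : Ω → S → A → ℝ)
    (hπ0 : ∀ ω s a, 0 ≤ π ω s a) (hπ1 : ∀ ω s, ∑ a, π ω s a = 1)
    (β : Ω → S → ℝ) (hβ0 : ∀ ω s, 0 ≤ β ω s) (hβ1 : ∀ ω s, β ω s ≤ 1)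
    (πΩ : S → Ω → ℝ)
    (hπΩ0 : ∀ s ω, 0 ≤ πΩ s ω)
    (I : ℝ → S → Ω → ℝ)
    (hIdiff : ∀ s ω, Differentiable ℝ (fun z => I z s ω))
    (hI0 : ∀ z s ω, 0 ≤ I z s ω)
    (hIpos : ∀ z s, 0 < ∑ ω, I z s ω * πΩ s ω)
    (πI : ℝ → S → Ω → ℝ)
    (hπI : ∀ z s ω, πI z s ω = I z s ω * πΩ s ω / ∑ ω', I z s ω' * πΩ s ω')
    (QU : ℝ → S → Ω → A → ℝ) (QΩ : ℝ → S → Ω → ℝ)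
    (hQΩ : ∀ z s ω, QΩ z s ω = ∑ a, π ω s a * QU z s ω a)
    (hQU : ∀ z s ω a, QU z s ω a = r s a + γ * ∑ s', P s a s' *
      ((1 - β ω s') * QΩ z s' ω + β ω s' * ∑ ω', πI z s' ω' * QΩ z s' ω'))
    (P₁ : ℝ → Matrix (S × Ω) (S × Ω) ℝ)
    (hP₁ : ∀ z s ω s' ω', P₁ z (s, ω) (s', ω') =
      ∑ a, π ω s a * P s a s' *
        ((1 - β ω s') * (if ω' = ω then 1 else 0) + β ω s' * πI z s' ω')) :
    ∀ z s ω,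
      deriv (fun z => QΩ z s ω) z =
        ∑ x : S × Ω, (∑' t : ℕ, γ ^ t * (P₁ z ^ t) (s, ω) x) *
          (γ * ∑ a, π x.2 x.1 a * ∑ s', P x.1 a s' * (β x.2 s' *
            ∑ ω', deriv (fun z => πI z s' ω') z * QΩ z s' ω')) := by
  intro z s ω
  have hπI_nonneg z s ω : 0 ≤ πI z s ω := by
    rw [hπI]
    exact div_nonneg (mul_nonneg (hI0 z s ω) (hπΩ0 s ω)) (hIpos z s).le
  have hπI_sum z s : ∑ ω, πI z s ω = 1 := by
    simp only [hπI, ← sum_div, div_self (hIpos z s).ne']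
  have hπI_deriv s ω : HasDerivAt (fun z => πI z s ω) (deriv (fun z => πI z s ω) z) z := by
    simp only [hπI]
    exact (((hIdiff s ω).mul_const _).div (Differentiable.fun_sum fun ω' _ =>
      (hIdiff s ω').mul_const _) fun z => (hIpos z s).ne').differentiableAt.hasDerivAt
  have hP₁_eq z : P₁ z = continuationKernel π P β + terminationKernel π P β (πI z) := by
    ext ⟨s, ω⟩ ⟨s', ω'⟩
    simp [hP₁, continuationKernel, terminationKernel, mul_add, sum_add_distrib]
  have hP₁_deriv x y : HasDerivAt (fun z => P₁ z x y)
      (terminationKernel π P β (fun s ω => deriv (fun z => πI z s ω) z) x y) z := by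
    simp only [hP₁_eq, Matrix.add_apply]
    exact (hasDerivAt_terminationKernel_apply π P β hπI_deriv x y).const_add _
  have hQ := hasDerivAt_apply_of_eq_add_smul_mulVec hγ0 hγ1
    (fun z => hP₁_eq z ▸ continuationKernel_add_terminationKernel_mem_rowStochastic π P β
      hP0 hP1 hπ0 hπ1 hβ0 hβ1 (hπI_nonneg z) (hπI_sum z))
    hP₁_deriv (fun z => hP₁_eq z ▸ optionValue_eq_add_smul_mulVec π P β (hQΩ z) (hQU z)) (s, ω)
  rw [hQ.deriv]
  refine sum_congr rfl fun ⟨s', ω'⟩ _ => ?_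
  simp [terminationKernel_mulVec, discountedVisits]

/-- **Theorem 1: interest-function policy gradient.** The gradient of the
expected discounted return with respect to the interest parameter `z` at `(s,ω)` is
`Σ_{(s̃,ω̃)} μ̂^z((s̃,ω̃)|(s,ω)) · γ Σ_a π_ω̃(a|s̃) Σ_{s'} P(s'|s̃,a) β_ω̃(s')
  Σ_{ω'} (∂π_{I_z}(ω'|s')/∂z) Q_Ω^z(s',ω')`,
where `μ̂^z = Σ_t γ^t (P₁^z)^t` is the discounted weighting of state-option pairs. -/
theorem interest_option_critic_policy_gradient
    {S A Ω : Type*} [Fintype S] [Fintype A] [Fintype Ω]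
    [DecidableEq S] [DecidableEq A] [DecidableEq Ω]
    [Nonempty S] [Nonempty A] [Nonempty Ω]
    (r : S → A → ℝ) (P : S → A → S → ℝ)
    (hP0 : ∀ s a s', 0 ≤ P s a s') (hP1 : ∀ s a, ∑ s', P s a s' = 1)
    (γ : ℝ) (hγ0 : 0 ≤ γ) (hγ1 : γ < 1)
    (π : Ω → S → A → ℝ)
    (hπ0 : ∀ ω s a, 0 ≤ π ω s a) (hπ1 : ∀ ω s, ∑ a, π ω s a = 1)
    (β : Ω → S → ℝ) (hβ0 : ∀ ω s, 0 ≤ β ω s) (hβ1 : ∀ ω s, β ω s ≤ 1)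
    (πΩ : S → Ω → ℝ)
    (hπΩ0 : ∀ s ω, 0 ≤ πΩ s ω) (hπΩ1 : ∀ s, ∑ ω, πΩ s ω = 1)
    (I : ℝ → S → Ω → ℝ)
    (hIdiff : ∀ s ω, Differentiable ℝ (fun z => I z s ω))
    (hI0 : ∀ z s ω, 0 ≤ I z s ω)
    (hIpos : ∀ z s, 0 < ∑ ω, I z s ω * πΩ s ω)
    (πI : ℝ → S → Ω → ℝ)
    (hπI : ∀ z s ω, πI z s ω = I z s ω * πΩ s ω / ∑ ω', I z s ω' * πΩ s ω')
    (QU : ℝ → S → Ω → A → ℝ) (QΩ : ℝ → S → Ω → ℝ)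
    (hQΩ : ∀ z s ω, QΩ z s ω = ∑ a, π ω s a * QU z s ω a)
    (hQU : ∀ z s ω a, QU z s ω a = r s a + γ * ∑ s', P s a s' *
      ((1 - β ω s') * QΩ z s' ω + β ω s' * ∑ ω', πI z s' ω' * QΩ z s' ω'))
    (P₁ : ℝ → Matrix (S × Ω) (S × Ω) ℝ)
    (hP₁ : ∀ z s ω s' ω', P₁ z (s, ω) (s', ω') =
      ∑ a, π ω s a * P s a s' *
        ((1 - β ω s') * (if ω' = ω then 1 else 0) + β ω s' * πI z s' ω')) :
    ∀ z s ω,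
      deriv (fun z => QΩ z s ω) z =
        ∑ x : S × Ω, (∑' t : ℕ, γ ^ t * (P₁ z ^ t) (s, ω) x) *
          (γ * ∑ a, π x.2 x.1 a * ∑ s', P x.1 a s' * (β x.2 s' *
            ∑ ω', deriv (fun z => πI z s' ω') z * QΩ z s' ω')) :=
  interest_option_critic_policy_gradient_general r P hP0 hP1 γ hγ0 hγ1 π hπ0 hπ1 β hβ0 hβ1 πΩ hπΩ0 I
    hIdiff hI0 hIpos πI hπI QU QΩ hQΩ hQU P₁ hP₁
end
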